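/- arXiv:2303.18238 — 4 statements merged into one kernel-verified Lean document; each statement's English description precedes it below -/
import Mathlib

section
/- Let X be a proper metric space, let A, B ⊆ X be nonempty closed sets with A bounded, and suppose the intersection S := A ∩ B is nonempty. Then for every d > 0 there exists d̲ > 0 such that every point x ∈ X satisfying dist(x, A) ≤ d̲ and dist(x, B) ≤ d̲ also satisfies dist(x, S) ≤ d. -/
/-- Lemma 4: for nonempty closed sets `A`, `B` in a proper metric space with `A`
bounded and `A ∩ B` nonempty, points close to both `A` and `B` are close to `A ∩ B`. -/
theorem intersection_dist_lower_bound
    {X : Type*} [MetricSpace X] [ProperSpace X]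
    (A B : Set X) (hA : A.Nonempty) (hB : B.Nonempty)
    (hAc : IsClosed A) (hBc : IsClosed B)
    (hAb : Bornology.IsBounded A)
    (hS : (A ∩ B).Nonempty) :
    ∀ d > 0, ∃ dlow > 0, ∀ x : X,
      Metric.infDist x A ≤ dlow → Metric.infDist x B ≤ dlow →
      Metric.infDist x (A ∩ B) ≤ d := by
  intro d hd
  by_contra h
  push_neg at h
  choose x hxA hxB hxS using fun n : ℕ =>
    h (1 / (n + 1)) (by positivity)
  have hlim : Filter.Tendsto (fun n : ℕ => (1 : ℝ) / (n + 1)) Filter.atTop (nhds 0) :=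
    tendsto_one_div_add_atTop_nhds_zero_nat
  have hK : IsCompact (Metric.cthickening 2 A) :=
    Metric.isCompact_of_isClosed_isBounded Metric.isClosed_cthickening hAb.cthickening
  have hmem : ∀ n : ℕ, x n ∈ Metric.cthickening 2 A := by
    intro n
    have hlt : Metric.infDist (x n) A < 2 := by
      have h1 : (1 : ℝ) / (n + 1) ≤ 1 := by
        rw [div_le_one (by positivity)]
        linarith [Nat.cast_nonneg (α := ℝ) n]
      linarith [hxA n]
    obtain ⟨y, hy, hdy⟩ := (Metric.infDist_lt_iff hA).mp hlt
    exact Metric.mem_cthickening_of_dist_le (x n) y 2 A hy hdy.le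
  obtain ⟨p, _, φ, hφ, hconv⟩ := hK.tendsto_subseq hmem
  have hcont : Filter.Tendsto (fun n => x (φ n)) Filter.atTop (nhds p) := hconv
  have hsub : Filter.Tendsto (fun n : ℕ => (1 : ℝ) / (φ n + 1)) Filter.atTop (nhds 0) :=
    hlim.comp hφ.tendsto_atTop
  have hpA : p ∈ A := by
    have : Metric.infDist p A = 0 := by
      have h1 : Filter.Tendsto (fun n => Metric.infDist (x (φ n)) A) Filter.atTop
          (nhds (Metric.infDist p A)) :=
        ((Metric.continuous_infDist_pt A).continuousAt).tendsto.comp hcont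
      have h0 : Filter.Tendsto (fun n => Metric.infDist (x (φ n)) A) Filter.atTop (nhds 0) := by
        refine squeeze_zero (fun n => Metric.infDist_nonneg) (fun n => hxA (φ n)) hsub
      exact tendsto_nhds_unique h1 h0
    exact (hAc.mem_iff_infDist_zero hA).mpr this
  have hpB : p ∈ B := by
    have : Metric.infDist p B = 0 := by
      have h1 : Filter.Tendsto (fun n => Metric.infDist (x (φ n)) B) Filter.atTop
          (nhds (Metric.infDist p B)) :=
        ((Metric.continuous_infDist_pt B).continuousAt).tendsto.comp hcont
      have h0 : Filter.Tendsto (fun n => Metric.infDist (x (φ n)) B) Filter.atTop (nhds 0) := by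
        refine squeeze_zero (fun n => Metric.infDist_nonneg) (fun n => hxB (φ n)) hsub
      exact tendsto_nhds_unique h1 h0
    exact (hBc.mem_iff_infDist_zero hB).mpr this
  have hdist : Filter.Tendsto (fun n => dist (x (φ n)) p) Filter.atTop (nhds 0) :=
    tendsto_iff_dist_tendsto_zero.mp hcont
  have : ∀ᶠ n in Filter.atTop, dist (x (φ n)) p < d :=
    hdist.eventually (gt_mem_nhds hd)
  obtain ⟨n, hn⟩ := this.exists
  have hle : Metric.infDist (x (φ n)) (A ∩ B) ≤ dist (x (φ n)) p :=
    Metric.infDist_le_dist_of_mem ⟨hpA, hpB⟩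
  have := hxS (φ n)
  linarith
end

section
/- Let A, B ⊆ ℝⁿ be nonempty closed sets with A bounded such that S := A ∩ B is nonempty, and let Z ⊆ ℝᵏ be a nonempty closed set. Then for every d > 0 there exists d̲ > 0 such that every point (x, y) ∈ ℝⁿ × ℝᵏ satisfying dist((x, y), A × Z) ≤ d̲ and dist((x, y), B × Z) ≤ d̲ also satisfies dist((x, y), S × Z) ≤ d. -/
/-!
On the compact set `A`, the points at distance at least `ε` from `A ∩ B` form a compact set
disjoint from the closed set `B`, so they stay a uniform distance away from `B`. A point close
to both `A` and `B` has a nearest point of `A` that is still close to `B`, hence close to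
`A ∩ B`. In the product, the distance to a product set is the maximum of the distances of the
components to the factors, so the common factor `Z` passes through unchanged.
-/

open Metric Set

namespace Metric

theorem infDist_prod {α β : Type*} [PseudoMetricSpace α] [PseudoMetricSpace β]
    {s : Set α} {t : Set β} (hs : s.Nonempty) (ht : t.Nonempty) (p : α × β) :
    infDist p (s ×ˢ t) = max (infDist p.1 s) (infDist p.2 t) := by
  simp only [infDist, infEDist_prod, ENNReal.toReal_max (infEDist_ne_top hs) (infEDist_ne_top ht)]

end Metric

section CompactIntersection

variable {α : Type*} [PseudoMetricSpace α] {A B : Set α}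

theorem IsCompact.exists_inter_thickening_subset_thickening_inter (hA : IsCompact A)
    (hB : IsClosed B) {ε : ℝ} (hε : 0 < ε) :
    ∃ δ > 0, A ∩ thickening δ B ⊆ thickening ε (A ∩ B) := by
  set far := A \ thickening ε (A ∩ B)
  have hfar : Disjoint far B := disjoint_left.2 fun a ⟨haA, haε⟩ haB =>
    haε (self_subset_thickening hε _ ⟨haA, haB⟩)
  obtain ⟨δ, hδ, hdisj⟩ := hfar.exists_thickenings (hA.diff isOpen_thickening) hB
  refine ⟨δ, hδ, fun a ⟨haA, haB⟩ => by_contra fun haε => ?_⟩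
  exact disjoint_left.1 hdisj (self_subset_thickening hδ _ ⟨haA, haε⟩) haB

theorem IsCompact.exists_pos_forall_infDist_inter_le (hA : IsCompact A) (hB : IsClosed B)
    {d : ℝ} (hd : 0 < d) :
    ∃ δ > 0, ∀ x, infDist x A ≤ δ → infDist x B ≤ δ → infDist x (A ∩ B) ≤ d := by
  obtain ⟨η, hη, hsub⟩ := hA.exists_inter_thickening_subset_thickening_inter hB (half_pos hd)
  refine ⟨min (η / 3) (d / 2), by positivity, fun x hxA hxB => ?_⟩
  rcases (A ∩ B).eq_empty_or_nonempty with hAB | hAB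
  · simp [hAB, hd.le]
  obtain ⟨a, haA, hxa⟩ := hA.exists_infDist_eq_dist (hAB.mono inter_subset_left) x
  have haB : infDist a B < η := by
    linarith [infDist_le_infDist_add_dist (x := a) (y := x) (s := B), dist_comm a x,
      min_le_left (η / 3) (d / 2)]
  have haAB : infDist a (A ∩ B) < d / 2 :=
    (mem_thickening_iff_infDist_lt hAB).1 <|
      hsub ⟨haA, (mem_thickening_iff_infDist_lt (hAB.mono inter_subset_right)).2 haB⟩
  linarith [infDist_le_infDist_add_dist (x := x) (y := a) (s := A ∩ B),
    min_le_right (η / 3) (d / 2)]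

end CompactIntersection

theorem intersection_dist_lower_bound_product_general
    {n k : ℕ}
    (A B : Set (EuclideanSpace ℝ (Fin n))) (Z : Set (EuclideanSpace ℝ (Fin k)))
    (hA : A.Nonempty) (hB : B.Nonempty) (hZ : Z.Nonempty)
    (hAc : IsClosed A) (hBc : IsClosed B)
    (hAb : Bornology.IsBounded A)
    (hS : (A ∩ B).Nonempty) :
    ∀ d > 0, ∃ dlow > 0, ∀ p : EuclideanSpace ℝ (Fin n) × EuclideanSpace ℝ (Fin k),
      Metric.infDist p (A ×ˢ Z) ≤ dlow → Metric.infDist p (B ×ˢ Z) ≤ dlow →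
      Metric.infDist p ((A ∩ B) ×ˢ Z) ≤ d := by
  intro d hd
  obtain ⟨δ, hδ, hbase⟩ :=
    (isCompact_of_isClosed_isBounded hAc hAb).exists_pos_forall_infDist_inter_le hBc hd
  refine ⟨min δ d, lt_min hδ hd, fun p hpA hpB => ?_⟩
  rw [infDist_prod hA hZ, max_le_iff, le_min_iff, le_min_iff] at hpA
  rw [infDist_prod hB hZ, max_le_iff, le_min_iff] at hpB
  rw [infDist_prod hS hZ]
  exact max_le (hbase p.1 hpA.1.1 hpB.1.1) hpA.2.2

/-- Remark 3: extension of the intersection-distance lemma (Lemma 4) to sets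
unbounded in the same product dimensions: `A × Z` and `B × Z` share the common
factor `Z`, and closeness to both implies closeness to `(A ∩ B) × Z`. -/
theorem intersection_dist_lower_bound_product
    {n k : ℕ}
    (A B : Set (EuclideanSpace ℝ (Fin n))) (Z : Set (EuclideanSpace ℝ (Fin k)))
    (hA : A.Nonempty) (hB : B.Nonempty) (hZ : Z.Nonempty)
    (hAc : IsClosed A) (hBc : IsClosed B) (hZc : IsClosed Z)
    (hAb : Bornology.IsBounded A)
    (hS : (A ∩ B).Nonempty) :
    ∀ d > 0, ∃ dlow > 0, ∀ p : EuclideanSpace ℝ (Fin n) × EuclideanSpace ℝ (Fin k),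
      Metric.infDist p (A ×ˢ Z) ≤ dlow → Metric.infDist p (B ×ˢ Z) ≤ dlow →
      Metric.infDist p ((A ∩ B) ×ˢ Z) ≤ d :=
  intersection_dist_lower_bound_product_general A B Z hA hB hZ hAc hBc hAb hS
end

section
/- Let μ > 0 and L ∈ ℝ, and let W : ℝ → ℝ be a differentiable function such that W'(t) ≤ -μ for every t ≥ 0 with W(t) > L. Then W(t) ≤ max(L, W(0) - μ·t) for every t ≥ 0. -/
/-!
Once `W` is at or below `L` it can never climb above `L` again, since it would have to cross
every level `L + ε` upwards while decreasing there. So if `W t > L`, then `W > L` on all of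
`[0, t]`, hence `W' ≤ -μ` there, and the mean value inequality gives `W t ≤ W 0 - μ t`.
-/

open Set

theorem image_le_of_le_of_deriv_right_neg_above {f f' : ℝ → ℝ} {a b L : ℝ}
    (hf : ContinuousOn f (Icc a b)) (hf' : ∀ x ∈ Ico a b, HasDerivWithinAt f (f' x) (Ici x) x)
    (ha : f a ≤ L) (hf'_neg : ∀ x ∈ Ico a b, L < f x → f' x < 0) :
    ∀ ⦃x⦄, x ∈ Icc a b → f x ≤ L := by
  intro x hx
  refine le_of_forall_pos_le_add fun ε hε => ?_
  refine image_le_of_deriv_right_lt_deriv_boundary' hf hf' (B := fun _ => L + ε) (B' := 0)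
    (by linarith) continuousOn_const (fun y _ => hasDerivWithinAt_const y _ _) ?_ hx
  intro y hy hfy
  exact hf'_neg y hy (by rw [hfy]; linarith)

/-- Scalar comparison principle underlying Lemma 2: a Lyapunov value that decreases
at rate at least `μ` whenever it exceeds the level `L` satisfies the explicit decay
estimate `W t ≤ max L (W 0 - μ t)`. -/
theorem scalar_comparison_principle
    (μ L : ℝ) (hμ : 0 < μ)
    (W : ℝ → ℝ) (hW : Differentiable ℝ W)
    (hderiv : ∀ t : ℝ, 0 ≤ t → L < W t → deriv W t ≤ -μ) :
    ∀ t : ℝ, 0 ≤ t → W t ≤ max L (W 0 - μ * t) := by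
  intro t ht
  by_cases hWt : W t ≤ L
  · exact le_max_of_le_left hWt
  have above : ∀ s ∈ Icc 0 t, L < W s := by
    intro s hs
    by_contra! hs_le
    refine hWt (image_le_of_le_of_deriv_right_neg_above hW.continuous.continuousOn
      (fun x _ => (hW x).hasDerivAt.hasDerivWithinAt) hs_le (fun x hx hLx => ?_) ⟨hs.2, le_rfl⟩)
    exact (hderiv x (hs.1.trans hx.1) hLx).trans_lt (neg_neg_of_pos hμ)
  have decay : W t - W 0 ≤ -μ * (t - 0) := by
    refine (convex_Icc 0 t).image_sub_le_mul_sub_of_deriv_le hW.continuous.continuousOn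
      hW.differentiableOn (fun x hx => ?_) 0 ⟨le_rfl, ht⟩ t ⟨ht, le_rfl⟩ ht
    rw [interior_Icc] at hx
    exact hderiv x hx.1.le (above x (Ioo_subset_Icc_self hx))
  exact le_max_of_le_right (by linarith)
end

section
/- Let M ⊆ ℝⁿ be a nonempty closed set, let α̲, ᾱ : [0, ∞) → [0, ∞) be continuous strictly increasing functions, and let V : ℝⁿ → ℝ satisfy α̲(dist(z, M)) ≤ V(z) ≤ ᾱ(dist(z, M)) for all z ∈ ℝⁿ. Let μ > 0, v > 0, P > 0 with α̲(v) ≤ ᾱ(P), and let x : [0, ∞) → ℝⁿ be a trajectory with dist(x(0), M) ≤ P such that t ↦ V(x(t)) is differentiable and its derivative at each t ≥ 0 with V(x(t)) > α̲(v) is at most -μ. Then for every t ≥ (ᾱ(P) - α̲(v))/μ, it holds that dist(x(t), M) ≤ v. -/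
/-!
While `V (x t)` stays above `α̲ v` it decreases at rate at least `μ` from its initial value
`≤ ᾱ P`, so it must reach the level `α̲ v` by time `(ᾱ P - α̲ v) / μ`. It cannot rise above
that level again: after the last time it was below the level it would be decreasing. The lower
sandwich bound then turns `V (x t) ≤ α̲ v` into `dist (x t, M) ≤ v`.
-/

open Set

theorem le_max_sub_mul_of_deriv_le_neg {W : ℝ → ℝ} {a b c μ : ℝ} (hW : Differentiable ℝ W)
    (hμ : 0 ≤ μ) (hab : a ≤ b) (hderiv : ∀ t ∈ Ioo a b, c < W t → deriv W t ≤ -μ) :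
    W b ≤ max c (W a - μ * (b - a)) := by
  by_contra! h
  obtain ⟨hcb, hlin⟩ := max_lt_iff.1 h
  have drop : ∀ s ∈ Icc a b, (∀ t ∈ Ioo s b, c < W t) → W b - W s ≤ -μ * (b - s) :=
    fun s hs hgt => (convex_Icc s b).image_sub_le_mul_sub_of_deriv_le
      hW.continuous.continuousOn hW.differentiableOn
      (fun t ht => by
        rw [interior_Icc] at ht
        exact hderiv t ⟨hs.1.trans_lt ht.1, ht.2⟩ (hgt t ht))
      s (left_mem_Icc.2 hs.2) b (right_mem_Icc.2 hs.2) hs.2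
  set A := Icc a b ∩ W ⁻¹' Iic c
  rcases A.eq_empty_or_nonempty with hA | hA
  · have hgt : ∀ t ∈ Ioo a b, c < W t := fun t ht =>
      lt_of_not_ge fun hle => hA.subset ⟨Ioo_subset_Icc_self ht, hle⟩
    linarith [drop a (left_mem_Icc.2 hab) hgt]
  · -- `s` is the last time in `[a, b]` at which `W ≤ c`
    obtain ⟨s, ⟨hs, hsc⟩, hlast⟩ :=
      (isCompact_Icc.inter_right (isClosed_le hW.continuous continuous_const)).exists_isGreatest hA
    have hgt : ∀ t ∈ Ioo s b, c < W t := fun t ht =>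
      lt_of_not_ge fun hle => ht.1.not_ge (hlast ⟨⟨hs.1.trans ht.1.le, ht.2.le⟩, hle⟩)
    have : 0 ≤ μ * (b - s) := mul_nonneg hμ (sub_nonneg.2 hs.2)
    linarith [drop s hs hgt, show W s ≤ c from hsc]

theorem boundary_layer_attraction_time_general
    {n : ℕ}
    (M : Set (EuclideanSpace ℝ (Fin n)))
    (αlow αup : ℝ → ℝ)
    (hαlowM : StrictMonoOn αlow (Set.Ici 0)) (hαupM : StrictMonoOn αup (Set.Ici 0))
    (V : EuclideanSpace ℝ (Fin n) → ℝ)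
    (hsandwich : ∀ z, αlow (Metric.infDist z M) ≤ V z ∧
      V z ≤ αup (Metric.infDist z M))
    (μ v P : ℝ) (hμ : 0 < μ) (hv : 0 < v)
    (hlev : αlow v ≤ αup P)
    (x : ℝ → EuclideanSpace ℝ (Fin n))
    (hx0 : Metric.infDist (x 0) M ≤ P)
    (hVdiff : Differentiable ℝ (fun t => V (x t)))
    (hVderiv : ∀ t : ℝ, 0 ≤ t → αlow v < V (x t) →
      deriv (fun s => V (x s)) t ≤ -μ) :
    ∀ t : ℝ, (αup P - αlow v) / μ ≤ t → Metric.infDist (x t) M ≤ v := by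
  intro t ht
  have ht0 : 0 ≤ t := (div_nonneg (sub_nonneg.2 hlev) hμ.le).trans ht
  have hV0 : V (x 0) ≤ αup P := (hsandwich (x 0)).2.trans
    (hαupM.monotoneOn Metric.infDist_nonneg (Metric.infDist_nonneg.trans hx0) hx0)
  have hdecay : αup P - μ * t ≤ αlow v := by linarith [(div_le_iff₀' hμ).1 ht]
  have hVt : V (x t) ≤ αlow v :=
    (le_max_sub_mul_of_deriv_le_neg hVdiff hμ.le ht0 fun s hs => hVderiv s hs.1.le).trans
      (max_le le_rfl (by linarith))
  exact (hαlowM.le_iff_le Metric.infDist_nonneg hv.le).1 ((hsandwich (x t)).1.trans hVt)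

/-- Quantitative conclusion of Lemma 2: under a class-K sandwich bound on the
boundary layer Lyapunov function `V` relative to the manifold `M` and a uniform
decrease rate `μ` along the trajectory outside the level set `α̲ v`, the trajectory
enters and remains in the `v`-neighborhood of `M` after flow time `(ᾱ P - α̲ v)/μ`. -/
theorem boundary_layer_attraction_time
    {n : ℕ}
    (M : Set (EuclideanSpace ℝ (Fin n))) (hMne : M.Nonempty) (hMc : IsClosed M)
    (αlow αup : ℝ → ℝ)
    (hαlowC : ContinuousOn αlow (Set.Ici 0)) (hαupC : ContinuousOn αup (Set.Ici 0))
    (hαlowM : StrictMonoOn αlow (Set.Ici 0)) (hαupM : StrictMonoOn αup (Set.Ici 0))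
    (hαlowPos : Set.MapsTo αlow (Set.Ici 0) (Set.Ici 0))
    (hαupPos : Set.MapsTo αup (Set.Ici 0) (Set.Ici 0))
    (V : EuclideanSpace ℝ (Fin n) → ℝ)
    (hsandwich : ∀ z, αlow (Metric.infDist z M) ≤ V z ∧
      V z ≤ αup (Metric.infDist z M))
    (μ v P : ℝ) (hμ : 0 < μ) (hv : 0 < v) (hP : 0 < P)
    (hlev : αlow v ≤ αup P)
    (x : ℝ → EuclideanSpace ℝ (Fin n))
    (hx0 : Metric.infDist (x 0) M ≤ P)
    (hVdiff : Differentiable ℝ (fun t => V (x t)))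
    (hVderiv : ∀ t : ℝ, 0 ≤ t → αlow v < V (x t) →
      deriv (fun s => V (x s)) t ≤ -μ) :
    ∀ t : ℝ, (αup P - αlow v) / μ ≤ t → Metric.infDist (x t) M ≤ v :=
  boundary_layer_attraction_time_general M αlow αup hαlowM hαupM V hsandwich μ v P hμ hv hlev x hx0
    hVdiff hVderiv
end
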